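/- arXiv:0705.4516 — 8 statements merged into one kernel-verified Lean document; each statement's English description precedes it below -/
import Mathlib

section
/- Let n, m ≥ 2, r = n/m > 0, and let x̄, ȳ ∈ ℝ, sX², sY² > 0. Then (μ, σX², σY²) with σX², σY² > 0 satisfies the three equations r(x̄−μ)σY² + (ȳ−μ)σX² = 0, σX² = (x̄−μ)² + sX², σY² = (ȳ−μ)² + sY² if and only if σX² = (x̄−μ)² + sX², σY² = (ȳ−μ)² + sY², and μ is a root of the cubic f(μ) = a₃μ³ + a₂μ² + a₁μ + a₀ where a₃ = 1+r, a₂ = −(2x̄+ȳ) − r(2ȳ+x̄), a₁ = x̄² + 2(1+r)x̄ȳ + rȳ² + sX² + r sY², a₀ = −x̄²ȳ − rȳ²x̄ − sX²ȳ − r sY² x̄. -/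
/-! Substituting the two variance equations into the score equation for `μ` turns its left-hand
side into minus the cubic, so on the set where the variance equations hold the score equation
and the cubic equation are the same condition. -/

theorem behrens_fisher_score_eq_neg_cubic {R : Type*} [CommRing R] (xbar ybar sX2 sY2 r μ : R) :
    r * (xbar - μ) * ((ybar - μ)^2 + sY2) + (ybar - μ) * ((xbar - μ)^2 + sX2) =
      -((1 + r) * μ^3 + (-(2*xbar + ybar) - r*(2*ybar + xbar)) * μ^2
        + (xbar^2 + 2*(1+r)*xbar*ybar + r*ybar^2 + sX2 + r*sY2) * μ
        + (-(xbar^2*ybar) - r*ybar^2*xbar - sX2*ybar - r*sY2*xbar)) := by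
  ring

theorem behrens_fisher_cubic_equiv_general
    (xbar ybar sX2 sY2 : ℝ)
    (r : ℝ)
    (μ σX2 σY2 : ℝ) :
    (r * (xbar - μ) * σY2 + (ybar - μ) * σX2 = 0 ∧
      σX2 = (xbar - μ)^2 + sX2 ∧ σY2 = (ybar - μ)^2 + sY2)
    ↔
    (σX2 = (xbar - μ)^2 + sX2 ∧ σY2 = (ybar - μ)^2 + sY2 ∧
      (1 + r) * μ^3 + (-(2*xbar + ybar) - r*(2*ybar + xbar)) * μ^2
        + (xbar^2 + 2*(1+r)*xbar*ybar + r*ybar^2 + sX2 + r*sY2) * μ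
        + (-(xbar^2*ybar) - r*ybar^2*xbar - sX2*ybar - r*sY2*xbar) = 0) := by
  have score_iff_cubic (hX : σX2 = (xbar - μ)^2 + sX2) (hY : σY2 = (ybar - μ)^2 + sY2) :
      r * (xbar - μ) * σY2 + (ybar - μ) * σX2 = 0 ↔
        (1 + r) * μ^3 + (-(2*xbar + ybar) - r*(2*ybar + xbar)) * μ^2
          + (xbar^2 + 2*(1+r)*xbar*ybar + r*ybar^2 + sX2 + r*sY2) * μ
          + (-(xbar^2*ybar) - r*ybar^2*xbar - sX2*ybar - r*sY2*xbar) = 0 := by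
    rw [hX, hY, behrens_fisher_score_eq_neg_cubic, neg_eq_zero]
  constructor
  · rintro ⟨h, hX, hY⟩
    exact ⟨hX, hY, (score_iff_cubic hX hY).1 h⟩
  · rintro ⟨hX, hY, h⟩
    exact ⟨(score_iff_cubic hX hY).2 h, hX, hY⟩

theorem behrens_fisher_cubic_equiv
    (n m : ℕ) (hn : 2 ≤ n) (hm : 2 ≤ m)
    (xbar ybar sX2 sY2 : ℝ) (hsX : 0 < sX2) (hsY : 0 < sY2)
    (r : ℝ) (hr : r = (n : ℝ) / m) (hrpos : 0 < r)
    (μ σX2 σY2 : ℝ) (hσX : 0 < σX2) (hσY : 0 < σY2) :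
    (r * (xbar - μ) * σY2 + (ybar - μ) * σX2 = 0 ∧
      σX2 = (xbar - μ)^2 + sX2 ∧ σY2 = (ybar - μ)^2 + sY2)
    ↔
    (σX2 = (xbar - μ)^2 + sX2 ∧ σY2 = (ybar - μ)^2 + sY2 ∧
      (1 + r) * μ^3 + (-(2*xbar + ybar) - r*(2*ybar + xbar)) * μ^2
        + (xbar^2 + 2*(1+r)*xbar*ybar + r*ybar^2 + sX2 + r*sY2) * μ
        + (-(xbar^2*ybar) - r*ybar^2*xbar - sX2*ybar - r*sY2*xbar) = 0) :=
  behrens_fisher_cubic_equiv_general xbar ybar sX2 sY2 r μ σX2 σY2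
end

section
/- Let r > 0 and x̄, ȳ ∈ ℝ, sX, sY > 0. Define the cubic coefficients a₃ = 1+r, a₂ = −(2x̄+ȳ) − r(2ȳ+x̄), a₁ = x̄² + 2(1+r)x̄ȳ + rȳ² + sX² + r sY², a₀ = −x̄²ȳ − rȳ²x̄ − sX²ȳ − r sY² x̄, and let Δ = a₁²a₂² − 4a₀a₂³ − 4a₁³a₃ + 18a₀a₁a₂a₃ − 27a₀²a₃². Then Δ = sY⁶ · D(γ, δ) where γ = sX/sY, δ = (x̄ − ȳ)/sY, and D(γ,δ) = δ⁶r² − 2δ⁴[γ²(2+2r−r²) + (2r³+2r⁴−r²)] − δ²[γ⁴(8+8r−r²) + (8r⁴+8r³−r²) − 2γ²(10r+19r²+10r³)] − 4(1+r)(r+γ²)³. -/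
/-
The cubic is `(t - ȳ)((t - x̄)² + sX²) + r (t - x̄)((t - ȳ)² + sY²)`. Its discriminant is unchanged
by the substitution `t ↦ t + ȳ`, which replaces `(x̄, ȳ)` by `(x̄ - ȳ, 0)`, and is homogeneous of
weight 6 when `x̄, ȳ, sX, sY` are all scaled by `sY`. This reduces everything to the case
`ȳ = 0, sY = 1`, where the discriminant is `D(γ, δ)` by expansion.
-/

noncomputable def D (r γ δ : ℝ) : ℝ :=
  δ^6*r^2 - 2*δ^4*(γ^2*(2 + 2*r - r^2) + (2*r^3 + 2*r^4 - r^2))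
  - δ^2*(γ^4*(8 + 8*r - r^2) + (8*r^4 + 8*r^3 - r^2)
      - 2*γ^2*(10*r + 19*r^2 + 10*r^3))
  - 4*(1 + r)*(r + γ^2)^3

namespace Cubic

variable {R : Type*} [CommRing R]

/-- The coefficients of `P(X + u)`. -/
def shift (P : Cubic R) (u : R) : Cubic R :=
  ⟨P.a, P.b + 3 * P.a * u, P.c + 2 * P.b * u + 3 * P.a * u ^ 2,
    P.d + P.c * u + P.b * u ^ 2 + P.a * u ^ 3⟩

/-- The coefficients of `u³ P(X / u)`. -/
def scale (P : Cubic R) (u : R) : Cubic R :=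
  ⟨P.a, u * P.b, u ^ 2 * P.c, u ^ 3 * P.d⟩

theorem discr_shift (P : Cubic R) (u : R) : (P.shift u).discr = P.discr := by
  simp only [discr, shift]
  ring

theorem discr_scale (P : Cubic R) (u : R) : (P.scale u).discr = u ^ 6 * P.discr := by
  simp only [discr, scale]
  ring

end Cubic

section BehrensFisher

variable {R : Type*} [CommRing R]

def behrensFisherCubic (r x y sX sY : R) : Cubic R :=
  ⟨1 + r, -(2 * x + y) - r * (2 * y + x),
    x ^ 2 + 2 * (1 + r) * x * y + r * y ^ 2 + sX ^ 2 + r * sY ^ 2,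
    -(x ^ 2 * y) - r * y ^ 2 * x - sX ^ 2 * y - r * sY ^ 2 * x⟩

theorem behrensFisherCubic_shift (r x y sX sY u : R) :
    (behrensFisherCubic r (x + u) (y + u) sX sY).shift u = behrensFisherCubic r x y sX sY := by
  ext <;> simp only [behrensFisherCubic, Cubic.shift] <;> ring

theorem behrensFisherCubic_mul (r x y sX sY u : R) :
    behrensFisherCubic r (u * x) (u * y) (u * sX) (u * sY) =
      (behrensFisherCubic r x y sX sY).scale u := by
  ext <;> simp only [behrensFisherCubic, Cubic.scale] <;> ring

theorem discr_behrensFisherCubic_sub (r x y sX sY : R) :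
    (behrensFisherCubic r x y sX sY).discr = (behrensFisherCubic r (x - y) 0 sX sY).discr := by
  rw [← behrensFisherCubic_shift r (x - y) 0 sX sY y, Cubic.discr_shift, sub_add_cancel, zero_add]

end BehrensFisher

theorem discr_behrensFisherCubic_zero_one (r γ δ : ℝ) :
    (behrensFisherCubic r δ 0 γ 1).discr = D r γ δ := by
  simp only [Cubic.discr, behrensFisherCubic, D]
  ring

theorem discriminant_factorization_general
    (r : ℝ)
    (xbar ybar sX sY : ℝ) (hsY : 0 < sY)
    (a₃ a₂ a₁ a₀ : ℝ)
    (h3 : a₃ = 1 + r)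
    (h2 : a₂ = -(2*xbar + ybar) - r*(2*ybar + xbar))
    (h1 : a₁ = xbar^2 + 2*(1+r)*xbar*ybar + r*ybar^2 + sX^2 + r*sY^2)
    (h0 : a₀ = -(xbar^2*ybar) - r*ybar^2*xbar - sX^2*ybar - r*sY^2*xbar)
    (Δ : ℝ)
    (hΔ : Δ = a₁^2*a₂^2 - 4*a₀*a₂^3 - 4*a₁^3*a₃ + 18*a₀*a₁*a₂*a₃ - 27*a₀^2*a₃^2) :
    Δ = sY^6 * D r (sX / sY) ((xbar - ybar) / sY) := by
  have hΔ_discr : Δ = (behrensFisherCubic r xbar ybar sX sY).discr := by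
    subst h3 h2 h1 h0 hΔ
    simp only [Cubic.discr, behrensFisherCubic]
    ring
  have hsY' : sY ≠ 0 := hsY.ne'
  calc Δ = (behrensFisherCubic r (xbar - ybar) 0 sX sY).discr := by
        rw [hΔ_discr, discr_behrensFisherCubic_sub]
    _ = (behrensFisherCubic r (sY * ((xbar - ybar) / sY)) (sY * 0) (sY * (sX / sY))
          (sY * 1)).discr := by
        rw [mul_div_cancel₀ _ hsY', mul_div_cancel₀ _ hsY', mul_zero, mul_one]
    _ = sY ^ 6 * D r (sX / sY) ((xbar - ybar) / sY) := by
        rw [behrensFisherCubic_mul, Cubic.discr_scale, discr_behrensFisherCubic_zero_one]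

theorem discriminant_factorization
    (r : ℝ) (hr : 0 < r)
    (xbar ybar sX sY : ℝ) (hsX : 0 < sX) (hsY : 0 < sY)
    (a₃ a₂ a₁ a₀ : ℝ)
    (h3 : a₃ = 1 + r)
    (h2 : a₂ = -(2*xbar + ybar) - r*(2*ybar + xbar))
    (h1 : a₁ = xbar^2 + 2*(1+r)*xbar*ybar + r*ybar^2 + sX^2 + r*sY^2)
    (h0 : a₀ = -(xbar^2*ybar) - r*ybar^2*xbar - sX^2*ybar - r*sY^2*xbar)
    (Δ : ℝ)
    (hΔ : Δ = a₁^2*a₂^2 - 4*a₀*a₂^3 - 4*a₁^3*a₃ + 18*a₀*a₁*a₂*a₃ - 27*a₀^2*a₃^2) :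
    Δ = sY^6 * D r (sX / sY) ((xbar - ybar) / sY) :=
  discriminant_factorization_general r xbar ybar sX sY hsY a₃ a₂ a₁ a₀ h3 h2 h1 h0 Δ hΔ
end

section
/- Let r > 0 and define the point γ* = (2r+1)√((r+2)r(2r+1))/(r+2)², δ* = 3(1+r)√(3(r+2)r)/(r+2)². Then D(γ*, δ*) = 0, where D is the polynomial D(γ,δ) = δ⁶r² − 2δ⁴[γ²(2+2r−r²) + (2r³+2r⁴−r²)] − δ²[γ⁴(8+8r−r²) + (8r⁴+8r³−r²) − 2γ²(10r+19r²+10r³)] − 4(1+r)(r+γ²)³. -/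
def discriminantInSquares (r g d : ℝ) : ℝ :=
  d^3*r^2 - 2*d^2*(g*(2 + 2*r - r^2) + (2*r^3 + 2*r^4 - r^2))
  - d*(g^2*(8 + 8*r - r^2) + (8*r^4 + 8*r^3 - r^2) - 2*g*(10*r + 19*r^2 + 10*r^3))
  - 4*(1 + r)*(r + g)^3

theorem D_eq_discriminantInSquares (r γ δ : ℝ) :
    D r γ δ = discriminantInSquares r (γ^2) (δ^2) := by
  unfold D discriminantInSquares
  ring

theorem discriminantInSquares_cusp {r : ℝ} (hr : r + 2 ≠ 0) :
    discriminantInSquares r (r*(2*r + 1)^3 / (r + 2)^3) (27*r*(1 + r)^2 / (r + 2)^3) = 0 := by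
  unfold discriminantInSquares
  field_simp
  ring

theorem mul_sqrt_div_sq (a c : ℝ) {x : ℝ} (hx : 0 ≤ x) :
    (a * √x / c)^2 = a^2 * x / c^2 := by
  rw [div_pow, mul_pow, Real.sq_sqrt hx]

theorem cusp_on_curve (r : ℝ) (hr : 0 < r) :
    D r ((2*r + 1) * Real.sqrt ((r + 2)*r*(2*r + 1)) / (r + 2)^2)
        (3*(1 + r) * Real.sqrt (3*(r + 2)*r) / (r + 2)^2) = 0 := by
  have hr2 : r + 2 ≠ 0 := by positivity
  have hγ : ((2*r + 1) * √((r + 2)*r*(2*r + 1)) / (r + 2)^2)^2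
      = r*(2*r + 1)^3 / (r + 2)^3 := by
    rw [mul_sqrt_div_sq _ _ (by positivity)]
    field_simp
  have hδ : (3*(1 + r) * √(3*(r + 2)*r) / (r + 2)^2)^2 = 27*r*(1 + r)^2 / (r + 2)^3 := by
    rw [mul_sqrt_div_sq _ _ (by positivity)]
    field_simp
    ring
  rw [D_eq_discriminantInSquares, hγ, hδ]
  exact discriminantInSquares_cusp hr2
end

section
/- Let r > 0 and γ* = (2r+1)√((r+2)r(2r+1))/(r+2)², δ* = 3(1+r)√(3(r+2)r)/(r+2)². Then the gradient of D with respect to (γ, δ) vanishes at (γ*, δ*): ∂D/∂γ(γ*,δ*) = 0 and ∂D/∂δ(γ*,δ*) = 0. -/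
/-!
`D r γ δ` is a polynomial `E r a b` in `a = γ²` and `b = δ²`, so `∂D/∂γ = 2γ · ∂E/∂a` and
`∂D/∂δ = 2δ · ∂E/∂b`, evaluated at `(γ², δ²)`. At the given point
`γ² = r(2r+1)³/(r+2)³` and `δ² = 27r(1+r)²/(r+2)³`, and both partials of `E` vanish there
identically in `r`.
-/

/-- `∂E/∂a`, where `D r γ δ = E r (γ^2) (δ^2)`. -/
def Da (r a b : ℝ) : ℝ :=
  -2*b^2*(2 + 2*r - r^2) - b*(2*a*(8 + 8*r - r^2) - 2*(10*r + 19*r^2 + 10*r^3))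
  - 12*(1 + r)*(r + a)^2

/-- `∂E/∂b`, where `D r γ δ = E r (γ^2) (δ^2)`. -/
def Db (r a b : ℝ) : ℝ :=
  3*r^2*b^2 - 4*b*(a*(2 + 2*r - r^2) + (2*r^3 + 2*r^4 - r^2))
  - (a^2*(8 + 8*r - r^2) + (8*r^4 + 8*r^3 - r^2) - 2*a*(10*r + 19*r^2 + 10*r^3))

theorem deriv_D_gamma (r γ δ : ℝ) :
    deriv (fun γ => D r γ δ) γ = 2*γ * Da r (γ^2) (δ^2) := by
  simp (disch := fun_prop) only [D, deriv_fun_sub, deriv_fun_add, deriv_const_mul,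
    deriv_mul_const, deriv_const, deriv_fun_pow, deriv_id'']
  simp only [Da]
  ring

theorem deriv_D_delta (r γ δ : ℝ) :
    deriv (fun δ => D r γ δ) δ = 2*δ * Db r (γ^2) (δ^2) := by
  simp (disch := fun_prop) only [D, deriv_fun_sub, deriv_const_mul, deriv_mul_const,
    deriv_const, deriv_fun_pow, deriv_id'']
  simp only [Db]
  ring

section Cusp

variable {r : ℝ}

theorem sq_cusp_gamma (hr : 0 ≤ r) :
    ((2*r + 1) * √((r + 2)*r*(2*r + 1)) / (r + 2)^2)^2 = r*(2*r + 1)^3/(r + 2)^3 := by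
  rw [div_pow, mul_pow, Real.sq_sqrt (by positivity)]
  field_simp

theorem sq_cusp_delta (hr : 0 ≤ r) :
    (3*(1 + r) * √(3*(r + 2)*r) / (r + 2)^2)^2 = 27*r*(1 + r)^2/(r + 2)^3 := by
  rw [div_pow, mul_pow, Real.sq_sqrt (by positivity)]
  field_simp
  ring

theorem Da_cusp_eq_zero (hr : r + 2 ≠ 0) :
    Da r (r*(2*r + 1)^3/(r + 2)^3) (27*r*(1 + r)^2/(r + 2)^3) = 0 := by
  simp only [Da]
  field_simp
  ring

theorem Db_cusp_eq_zero (hr : r + 2 ≠ 0) :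
    Db r (r*(2*r + 1)^3/(r + 2)^3) (27*r*(1 + r)^2/(r + 2)^3) = 0 := by
  simp only [Db]
  field_simp
  ring

end Cusp

theorem cusp_gradient_vanishes (r : ℝ) (hr : 0 < r)
    (γs δs : ℝ)
    (hγ : γs = (2*r + 1) * Real.sqrt ((r + 2)*r*(2*r + 1)) / (r + 2)^2)
    (hδ : δs = 3*(1 + r) * Real.sqrt (3*(r + 2)*r) / (r + 2)^2) :
    deriv (fun γ => D r γ δs) γs = 0 ∧ deriv (fun δ => D r γs δ) δs = 0 := by
  have hr2 : r + 2 ≠ 0 := by positivity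
  rw [deriv_D_gamma, deriv_D_delta, hγ, hδ, sq_cusp_gamma hr.le, sq_cusp_delta hr.le,
    Da_cusp_eq_zero hr2, Db_cusp_eq_zero hr2]
  simp
end

section
/- For any r > 0 and any (γ, δ) ∈ ℝ² with D(γ, δ) ≥ 0, it holds that |δ| ≥ δ* where δ* = 3(1+r)√(3(r+2)r)/(r+2)². Equivalently, if |δ| < δ*, then D(γ,δ) < 0. -/
lemma mul_pow_three_lt_sq {a A W c : ℝ} (ha : 0 < a) (hc : 0 < c)
    (hW : 0 ≤ A → c ≤ W) (hle : a * A ^ 3 ≤ (W - c) ^ 2) :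
    a * A ^ 3 < W ^ 2 := by
  rcases lt_or_ge A 0 with hA | hA
  · have : a * A ^ 3 < 0 := mul_neg_of_pos_of_neg ha (Odd.pow_neg (by decide) hA)
    linarith [sq_nonneg W]
  · have hcW := hW hA
    calc a * A ^ 3 ≤ (W - c) ^ 2 := hle
      _ < W ^ 2 := pow_lt_pow_left₀ (by linarith) (by linarith) two_ne_zero

theorem D_neg_of_sq_mul_lt {r : ℝ} (hr : 0 < r) (γ δ : ℝ)
    (hδ : δ ^ 2 * (r + 2) ^ 3 < 27 * r * (1 + r) ^ 2) :
    D r γ δ < 0 := by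
  obtain ⟨u, hu⟩ : ∃ u, u = (r + 2) * (δ ^ 2 + γ ^ 2 + 1) := ⟨_, rfl⟩
  obtain ⟨A, hA⟩ : ∃ A, A = u - 2 * (2 * r + 1) ^ 2 := ⟨_, rfl⟩
  obtain ⟨W, hW⟩ : ∃ W, W = 8 * r * (r + 2) ^ 3 * γ ^ 2 + u ^ 2
      - 4 * (r ^ 2 + r + 1) * (2 * r + 1) * u + 4 * (2 * r + 1) ^ 3 := ⟨_, rfl⟩
  obtain ⟨c, hc⟩ : ∃ c, c = 8 * r * (27 * r * (1 + r) ^ 2 - δ ^ 2 * (r + 2) ^ 3) := ⟨_, rfl⟩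
  have hu2 : r + 2 ≤ u := by
    rw [hu]; nlinarith [sq_nonneg δ, sq_nonneg γ]
  have hc_pos : 0 < c := by rw [hc]; nlinarith
  have hWc : W - c = A * (u + 2 * (14 * r ^ 2 + 14 * r - 1)) := by
    subst hW hc hA hu; ring
  have hWc_sq : (W - c) ^ 2 - (u - 2) * A ^ 3
      = 16 * r * (r + 1) * A ^ 2 * (4 * u + (7 * r - 1) * (7 * r + 8)) := by
    subst hW hc hA hu; ring
  have hlt : (u - 2) * A ^ 3 < W ^ 2 := by
    refine mul_pow_three_lt_sq (by linarith) hc_pos (fun hA0 => ?_) ?_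
    · have : 0 ≤ W - c := hWc ▸ mul_nonneg hA0 (by nlinarith)
      linarith
    · have : 0 ≤ 16 * r * (r + 1) * A ^ 2 * (4 * u + (7 * r - 1) * (7 * r + 8)) := by
        have : 0 ≤ 4 * u + (7 * r - 1) * (7 * r + 8) := by nlinarith
        positivity
      linarith
  have hid : 16 * r * (r + 2) ^ 3 * D r γ δ = (u - 2) * A ^ 3 - W ^ 2 := by
    subst hW hA hu; unfold D; ring
  have : 0 < 16 * r * (r + 2) ^ 3 := by positivity
  nlinarith

lemma sq_mul_eq_of_eq_deltaStar {r δs : ℝ} (hr : 0 < r)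
    (hδs : δs = 3 * (1 + r) * Real.sqrt (3 * (r + 2) * r) / (r + 2) ^ 2) :
    δs ^ 2 * (r + 2) ^ 3 = 27 * r * (1 + r) ^ 2 := by
  have hsqrt : Real.sqrt (3 * (r + 2) * r) ^ 2 = 3 * (r + 2) * r :=
    Real.sq_sqrt (by positivity)
  have : (r + 2) ^ 4 ≠ 0 := by positivity
  rw [hδs, div_pow, mul_pow, hsqrt]
  field_simp
  ring

theorem D_nonneg_implies_delta_large (r : ℝ) (hr : 0 < r)
    (δs : ℝ) (hδs : δs = 3*(1 + r) * Real.sqrt (3*(r + 2)*r) / (r + 2)^2) :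
    (∀ γ δ : ℝ, 0 ≤ D r γ δ → δs ≤ |δ|) ∧
    (∀ γ δ : ℝ, |δ| < δs → D r γ δ < 0) := by
  have hneg : ∀ γ δ : ℝ, |δ| < δs → D r γ δ < 0 := by
    intro γ δ hδ
    have hsq : δ ^ 2 < δs ^ 2 := by
      simpa only [sq_abs] using pow_lt_pow_left₀ hδ (abs_nonneg δ) two_ne_zero
    refine D_neg_of_sq_mul_lt hr γ δ ?_
    rw [← sq_mul_eq_of_eq_deltaStar hr hδs]
    exact mul_lt_mul_of_pos_right hsq (by positivity)
  exact ⟨fun γ δ hD => not_lt.mp fun h => (hneg γ δ h).not_ge hD, hneg⟩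
end

section
/- For r = 1, D₁(γ, δ) ≥ 0 implies |δ| ≥ 2, with equality achievable only at γ = ±1 (i.e., if D₁(γ,δ) ≥ 0 and |δ| = 2 then γ² = 1 and D₁(γ,δ) = 0). -/
/-!
Write `x = 4 - δ²` and `u = γ² - 1`. Then `-D₁` is a sum of two terms in two ways,
`(x + 5u)²(x - 4u) + 108u²γ²` and `(x + 8u)(x - u)² + 108u²`.
For `x ≥ 0` the first decomposition has nonnegative terms when `u ≤ 0`, the second when `u ≥ 0`,
so `D₁ ≥ 0` forces both terms to vanish, which (as `x ≤ 4`) only happens at `x = u = 0`.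
-/

namespace D

variable {γ δ : ℝ}

theorem one_eq_neg_sq_mul_add (γ δ : ℝ) :
    D 1 γ δ = -(((4 - δ^2) + 5*(γ^2 - 1))^2 * ((4 - δ^2) - 4*(γ^2 - 1))
      + 108*(γ^2 - 1)^2*γ^2) := by
  unfold D; ring

theorem one_eq_neg_mul_sq_add (γ δ : ℝ) :
    D 1 γ δ = -(((4 - δ^2) + 8*(γ^2 - 1)) * ((4 - δ^2) - (γ^2 - 1))^2
      + 108*(γ^2 - 1)^2) := by
  unfold D; ring

theorem one_eq_zero (hγ : γ^2 = 1) (hδ : δ^2 = 4) : D 1 γ δ = 0 := by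
  rw [one_eq_neg_mul_sq_add, hγ, hδ]; ring

theorem sq_eq_of_one_nonneg_of_one_le_sq (h : 0 ≤ D 1 γ δ) (hδ : δ^2 ≤ 4) (hγ : 1 ≤ γ^2) :
    δ^2 = 4 ∧ γ^2 = 1 := by
  rw [one_eq_neg_mul_sq_add] at h
  have hlin : 0 ≤ ((4 - δ^2) + 8*(γ^2 - 1)) * ((4 - δ^2) - (γ^2 - 1))^2 :=
    mul_nonneg (by linarith) (sq_nonneg _)
  have hγ' : γ^2 = 1 := by nlinarith [sq_nonneg (γ^2 - 1)]
  rw [hγ'] at h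
  have hcube : (4 - δ^2)^3 = 0 :=
    le_antisymm (by linear_combination h) (pow_nonneg (sub_nonneg.mpr hδ) 3)
  exact ⟨(sub_eq_zero.mp (pow_eq_zero_iff three_ne_zero |>.mp hcube)).symm, hγ'⟩

theorem sq_eq_of_one_nonneg_of_sq_le_one (h : 0 ≤ D 1 γ δ) (hδ : δ^2 ≤ 4) (hγ : γ^2 ≤ 1) :
    δ^2 = 4 ∧ γ^2 = 1 := by
  have h' := h
  rw [one_eq_neg_sq_mul_add] at h'
  have hterm₁ : 0 ≤ ((4 - δ^2) + 5*(γ^2 - 1))^2 * ((4 - δ^2) - 4*(γ^2 - 1)) :=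
    mul_nonneg (sq_nonneg _) (by linarith)
  have hterm₂ : (γ^2 - 1)^2 * γ^2 = 0 := by
    linarith [mul_nonneg (sq_nonneg (γ^2 - 1)) (sq_nonneg γ)]
  rcases mul_eq_zero.mp hterm₂ with hγ1 | hγ0
  · have hγ1 : γ^2 = 1 := sub_eq_zero.mp (pow_eq_zero_iff two_ne_zero |>.mp hγ1)
    exact sq_eq_of_one_nonneg_of_one_le_sq h hδ hγ1.ge
  · rw [hγ0] at h'
    nlinarith [sq_nonneg δ]

theorem sq_eq_of_one_nonneg (h : 0 ≤ D 1 γ δ) (hδ : δ^2 ≤ 4) : δ^2 = 4 ∧ γ^2 = 1 :=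
  (le_total (γ^2) 1).elim (sq_eq_of_one_nonneg_of_sq_le_one h hδ)
    (sq_eq_of_one_nonneg_of_one_le_sq h hδ)

end D

theorem D_one_nonneg_bound (γ δ : ℝ) (h : 0 ≤ D 1 γ δ) :
    2 ≤ |δ| ∧ (|δ| = 2 → γ^2 = 1 ∧ D 1 γ δ = 0) := by
  refine ⟨?_, fun habs => ?_⟩
  · by_contra! hlt
    have hδ : δ^2 < 4 := by nlinarith [sq_abs δ, abs_nonneg δ]
    exact hδ.ne (D.sq_eq_of_one_nonneg h hδ.le).1
  · have hδ : δ^2 = 4 := by rw [← sq_abs, habs]; norm_num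
    have hγ := (D.sq_eq_of_one_nonneg h hδ.le).2
    exact ⟨hγ, D.one_eq_zero hγ hδ⟩
end

section
/- For r = 1 and any fixed γ ∈ ℝ, there is a threshold δ₊(γ) ≥ 2 such that the set {δ ≥ 0 : D₁(γ,δ) > 0} equals (δ₊(γ), ∞); i.e., D₁(γ,δ) > 0 if and only if |δ| > δ₊(γ). -/
set_option maxHeartbeats 1000000 in
theorem D_one_threshold (γ : ℝ) :
    ∃ δp : ℝ, 2 ≤ δp ∧ ∀ δ : ℝ, 0 < D 1 γ δ ↔ δp < |δ| := by
  set a : ℝ := γ^2 + 1 with ha_def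
  set c : ℝ := (γ^2 - 1)^2 with hc_def
  have ha : 1 ≤ a := by nlinarith [sq_nonneg γ]
  have hc : 0 ≤ c := sq_nonneg _
  set F : ℝ → ℝ := fun x => (x - 2*a)^3 - 27*c*(x - 2*a) - 54*a*c with hF_def
  have hDF : ∀ δ : ℝ, D 1 γ δ = F (δ^2) := by
    intro δ; simp only [hF_def, D, ha_def, hc_def]; ring
  -- monotonicity beyond a nonnegative point
  have mono : ∀ x y : ℝ, 2*a ≤ x → x < y → 0 ≤ F x → F x < F y := by
    intro x y hx hxy hFx
    set t := x - 2*a with ht_def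
    set s := y - 2*a with hs_def
    have ht : 0 ≤ t := by simp [ht_def]; linarith
    have hts : t < s := by simp [ht_def, hs_def]; linarith
    have hFx' : 0 ≤ t^3 - 27*c*t - 54*a*c := hFx
    show t^3 - 27*c*t - 54*a*c < s^3 - 27*c*s - 54*a*c
    rcases ht.eq_or_lt with h0 | h0
    · -- t = 0
      rw [← h0] at hFx'
      norm_num at hFx'
      have hc0 : c = 0 := by nlinarith
      have hs0 : 0 < s := by linarith
      rw [hc0, ← h0]
      simp
      positivity
    · -- 0 < t
      have ht2 : 27*c ≤ t^2 := by nlinarith [mul_nonneg (mul_nonneg (by linarith : (0:ℝ) ≤ a) hc) ht]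
      have hs0 : 0 < s := lt_trans h0 hts
      nlinarith [mul_pos hs0 h0, mul_pos hs0 hs0]
  have neg_low : ∀ x : ℝ, 0 ≤ x → x < 2*a → F x < 0 := by
    intro x h0 h2a
    have hcube : (x - 2*a)^3 < 0 := Odd.pow_neg ⟨1, by norm_num⟩ (by linarith)
    have : 0 ≤ 27*c*x := by positivity
    have heq : F x = (x - 2*a)^3 - 27*c*x := by simp only [hF_def]; ring
    rw [heq]; linarith
  -- a point where F is positive
  set M : ℝ := 2*a + 27*c + 54*a*c + 1 with hM_def
  have hMpos : 0 < F M := by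
    have heq : F M = (27*c + 54*a*c + 1)^3 - 27*c*(27*c + 54*a*c + 1) - 54*a*c := by
      simp only [hF_def, hM_def]; ring
    rw [heq]
    nlinarith [mul_nonneg hc hc, mul_nonneg (mul_nonneg (by linarith : (0:ℝ) ≤ a) hc) hc,
      mul_nonneg (by linarith : (0:ℝ) ≤ a) hc, sq_nonneg (27*c + 54*a*c),
      mul_nonneg (mul_nonneg (mul_nonneg (by linarith : (0:ℝ) ≤ a) hc) (by linarith : (0:ℝ) ≤ a)) hc]
  have h2aM : 2*a ≤ M := by nlinarith [mul_nonneg (by linarith : (0:ℝ) ≤ a) hc]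
  have hcont : Continuous F := by
    simp only [hF_def]; continuity
  have hivt := intermediate_value_Icc h2aM hcont.continuousOn
  have hmem : (0:ℝ) ∈ Set.Icc (F (2*a)) (F M) := by
    constructor
    · have : F (2*a) = -(54*a*c) := by simp only [hF_def]; ring
      rw [this]
      have : 0 ≤ 54*a*c := by positivity
      linarith
    · exact hMpos.le
  obtain ⟨x₀, hx₀mem, hFx₀⟩ := hivt hmem
  have hx₀2a : 2*a ≤ x₀ := hx₀mem.1
  have hx₀0 : 0 ≤ x₀ := by linarith
  have hF4 : F 4 ≤ 0 := by
    have : F 4 = -(4*c*(2*γ^2+25)) := by simp only [hF_def, ha_def, hc_def]; ring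
    rw [this]
    have : 0 ≤ 4*c*(2*γ^2+25) := by positivity
    linarith
  have hx₀4 : 4 ≤ x₀ := by
    by_contra h
    push_neg at h
    have := mono x₀ 4 hx₀2a h (le_of_eq hFx₀.symm)
    rw [hFx₀] at this
    linarith
  -- the threshold
  refine ⟨Real.sqrt x₀, ?_, ?_⟩
  · have h4 : (2:ℝ) = Real.sqrt 4 := by
      rw [show (4:ℝ) = 2^2 by norm_num, Real.sqrt_sq (by norm_num : (0:ℝ) ≤ 2)]
    rw [h4]
    exact Real.sqrt_le_sqrt hx₀4
  · intro δ
    have hsq : (Real.sqrt x₀)^2 = x₀ := Real.sq_sqrt hx₀0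
    rw [hDF δ]
    constructor
    · intro hpos
      have hgt : x₀ < δ^2 := by
        by_contra hle
        push_neg at hle
        rcases lt_or_eq_of_le hle with hlt | heq
        · rcases lt_or_ge (δ^2) (2*a) with hlow | hhigh
          · have := neg_low (δ^2) (sq_nonneg δ) hlow; linarith
          · have := mono (δ^2) x₀ hhigh hlt hpos.le
            rw [hFx₀] at this; linarith
        · rw [← heq] at hFx₀; linarith
      have habs : (Real.sqrt x₀)^2 < |δ|^2 := by rw [hsq, sq_abs]; exact hgt
      exact lt_of_pow_lt_pow_left₀ 2 (abs_nonneg δ) habs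
    · intro hlt
      have hgt : x₀ < δ^2 := by
        have := pow_lt_pow_left₀ hlt (Real.sqrt_nonneg x₀) (by norm_num : 2 ≠ 0)
        rwa [hsq, sq_abs] at this
      have := mono x₀ (δ^2) hx₀2a hgt (le_of_eq hFx₀.symm)
      rw [hFx₀] at this
      exact this
end

section
/- Let r > 0, r ≠ 1, and let (γ*, δ*) be the cusp of V(D_r) with γ*, δ* > 0, i.e., γ* = (2r+1)√((r+2)r(2r+1))/(r+2)² and δ* = 3(1+r)√(3(r+2)r)/(r+2)². Then the direction vector (v_γ, v_δ) with v_δ ≥ 0 and v_γ√(3(2r+1)) = v_δ(r−1) satisfies: the Hessian quadratic form of D_r at (γ*, δ*) vanishes in the direction (v_γ, v_δ). -/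
private lemma hd_pow2 (x : ℝ) : HasDerivAt (fun y : ℝ => y^2) (2*x) x := by
  simpa using hasDerivAt_pow 2 x

private lemma hd_pow3 (x : ℝ) : HasDerivAt (fun y : ℝ => y^3) (3*x^2) x := by
  simpa using hasDerivAt_pow 3 x

private lemma hd_pow4 (x : ℝ) : HasDerivAt (fun y : ℝ => y^4) (4*x^3) x := by
  simpa using hasDerivAt_pow 4 x

private lemma hd_pow5 (x : ℝ) : HasDerivAt (fun y : ℝ => y^5) (5*x^4) x := by
  simpa using hasDerivAt_pow 5 x

private lemma hd_pow6 (x : ℝ) : HasDerivAt (fun y : ℝ => y^6) (6*x^5) x := by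
  simpa using hasDerivAt_pow 6 x

private lemma hd_cube (r x : ℝ) :
    HasDerivAt (fun y : ℝ => (r + y^2)^3) (3*(r+x^2)^2*(2*x)) x := by
  have h := (hd_pow3 (r + x^2)).comp x ((hd_pow2 x).const_add r)
  exact h

/-- first derivative in γ -/
private lemma dDγ (r δ x : ℝ) :
    deriv (fun γ' => D r γ' δ) x =
      x*(-4*δ^4*(2+2*r-r^2) + 4*δ^2*(10*r+19*r^2+10*r^3) - 24*(1+r)*r^2)
      + x^3*(-4*δ^2*(8+8*r-r^2) - 48*(1+r)*r)
      + x^5*(-24*(1+r)) := by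
  have Hb : HasDerivAt (fun γ' => D r γ' δ)
      (0 - 2*δ^4*(2*x*(2+2*r-r^2))
        - δ^2*(4*x^3*(8+8*r-r^2) - 2*(2*x)*(10*r+19*r^2+10*r^3))
        - 4*(1+r)*(3*(r+x^2)^2*(2*x))) x := by
    exact (((hasDerivAt_const x (δ^6*r^2)).sub
        ((((hd_pow2 x).mul_const (2+2*r-r^2)).add_const (2*r^3+2*r^4-r^2)).const_mul (2*δ^4))).sub
        (((((hd_pow4 x).mul_const (8+8*r-r^2)).add_const (8*r^4+8*r^3-r^2)).sub
          (((hd_pow2 x).const_mul 2).mul_const (10*r+19*r^2+10*r^3))).const_mul (δ^2))).sub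
        ((hd_cube r x).const_mul (4*(1+r)))
  rw [Hb.deriv]; ring

/-- second derivative in γ -/
private lemma d2Dγ (r δ x : ℝ) :
    deriv (fun γ => deriv (fun γ' => D r γ' δ) γ) x =
      (-4*δ^4*(2+2*r-r^2) + 4*δ^2*(10*r+19*r^2+10*r^3) - 24*(1+r)*r^2)
      + 3*x^2*(-4*δ^2*(8+8*r-r^2) - 48*(1+r)*r)
      + 5*x^4*(-24*(1+r)) := by
  have hfun : (fun γ => deriv (fun γ' => D r γ' δ) γ)
      = (fun γ => γ*(-4*δ^4*(2+2*r-r^2) + 4*δ^2*(10*r+19*r^2+10*r^3) - 24*(1+r)*r^2)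
          + γ^3*(-4*δ^2*(8+8*r-r^2) - 48*(1+r)*r)
          + γ^5*(-24*(1+r))) := funext fun y => dDγ r δ y
  rw [hfun]
  have Hb : HasDerivAt (fun γ : ℝ => γ*(-4*δ^4*(2+2*r-r^2) + 4*δ^2*(10*r+19*r^2+10*r^3) - 24*(1+r)*r^2)
      + γ^3*(-4*δ^2*(8+8*r-r^2) - 48*(1+r)*r)
      + γ^5*(-24*(1+r)))
      (1*(-4*δ^4*(2+2*r-r^2) + 4*δ^2*(10*r+19*r^2+10*r^3) - 24*(1+r)*r^2)
        + 3*x^2*(-4*δ^2*(8+8*r-r^2) - 48*(1+r)*r)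
        + 5*x^4*(-24*(1+r))) x := by
    exact (((hasDerivAt_id x).mul_const _).add ((hd_pow3 x).mul_const _)).add
      ((hd_pow5 x).mul_const _)
  rw [Hb.deriv]; ring

/-- first derivative in δ -/
private lemma dDδ (r γ x : ℝ) :
    deriv (fun δ' => D r γ δ') x =
      x*(-2*(γ^4*(8+8*r-r^2) + (8*r^4+8*r^3-r^2) - 2*γ^2*(10*r+19*r^2+10*r^3)))
      + x^3*(-8*(γ^2*(2+2*r-r^2) + (2*r^3+2*r^4-r^2)))
      + x^5*(6*r^2) := by
  have Hb : HasDerivAt (fun δ' => D r γ δ')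
      (6*x^5*r^2 - 2*(4*x^3)*(γ^2*(2+2*r-r^2) + (2*r^3+2*r^4-r^2))
        - 2*x*(γ^4*(8+8*r-r^2) + (8*r^4+8*r^3-r^2) - 2*γ^2*(10*r+19*r^2+10*r^3))
        - 0) x := by
    exact ((((hd_pow6 x).mul_const (r^2)).sub
        (((hd_pow4 x).const_mul 2).mul_const (γ^2*(2+2*r-r^2) + (2*r^3+2*r^4-r^2)))).sub
        ((hd_pow2 x).mul_const (γ^4*(8+8*r-r^2) + (8*r^4+8*r^3-r^2)
          - 2*γ^2*(10*r+19*r^2+10*r^3)))).sub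
        (hasDerivAt_const x (4*(1+r)*(r+γ^2)^3))
  rw [Hb.deriv]; ring

/-- second derivative in δ -/
private lemma d2Dδ (r γ x : ℝ) :
    deriv (fun δ => deriv (fun δ' => D r γ δ') δ) x =
      (-2*(γ^4*(8+8*r-r^2) + (8*r^4+8*r^3-r^2) - 2*γ^2*(10*r+19*r^2+10*r^3)))
      + 3*x^2*(-8*(γ^2*(2+2*r-r^2) + (2*r^3+2*r^4-r^2)))
      + 5*x^4*(6*r^2) := by
  have hfun : (fun δ => deriv (fun δ' => D r γ δ') δ)
      = (fun δ => δ*(-2*(γ^4*(8+8*r-r^2) + (8*r^4+8*r^3-r^2) - 2*γ^2*(10*r+19*r^2+10*r^3)))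
          + δ^3*(-8*(γ^2*(2+2*r-r^2) + (2*r^3+2*r^4-r^2)))
          + δ^5*(6*r^2)) := funext fun y => dDδ r γ y
  rw [hfun]
  have Hb : HasDerivAt (fun δ : ℝ => δ*(-2*(γ^4*(8+8*r-r^2) + (8*r^4+8*r^3-r^2) - 2*γ^2*(10*r+19*r^2+10*r^3)))
      + δ^3*(-8*(γ^2*(2+2*r-r^2) + (2*r^3+2*r^4-r^2)))
      + δ^5*(6*r^2))
      (1*(-2*(γ^4*(8+8*r-r^2) + (8*r^4+8*r^3-r^2) - 2*γ^2*(10*r+19*r^2+10*r^3)))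
        + 3*x^2*(-8*(γ^2*(2+2*r-r^2) + (2*r^3+2*r^4-r^2)))
        + 5*x^4*(6*r^2)) x := by
    exact (((hasDerivAt_id x).mul_const _).add ((hd_pow3 x).mul_const _)).add
      ((hd_pow5 x).mul_const _)
  rw [Hb.deriv]; ring

/-- mixed second derivative -/
private lemma dDmix (r d x : ℝ) :
    deriv (fun γ => deriv (fun δ => D r γ δ) d) x =
      d*(-2*(4*x^3*(8+8*r-r^2) - 4*x*(10*r+19*r^2+10*r^3)))
      + d^3*(-16*x*(2+2*r-r^2)) := by
  have hfun : (fun γ => deriv (fun δ => D r γ δ) d)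
      = (fun γ => d*(-2*(γ^4*(8+8*r-r^2) + (8*r^4+8*r^3-r^2) - 2*γ^2*(10*r+19*r^2+10*r^3)))
          + d^3*(-8*(γ^2*(2+2*r-r^2) + (2*r^3+2*r^4-r^2)))
          + d^5*(6*r^2)) := funext fun y => dDδ r y d
  rw [hfun]
  have Hb : HasDerivAt (fun γ : ℝ => d*(-2*(γ^4*(8+8*r-r^2) + (8*r^4+8*r^3-r^2) - 2*γ^2*(10*r+19*r^2+10*r^3)))
      + d^3*(-8*(γ^2*(2+2*r-r^2) + (2*r^3+2*r^4-r^2)))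
      + d^5*(6*r^2))
      (d*(-2*(4*x^3*(8+8*r-r^2) - 2*(2*x)*(10*r+19*r^2+10*r^3)))
        + d^3*(-8*(2*x*(2+2*r-r^2)))
        + 0) x := by
    exact ((((((hd_pow4 x).mul_const (8+8*r-r^2)).add_const (8*r^4+8*r^3-r^2)).sub
        (((hd_pow2 x).const_mul 2).mul_const (10*r+19*r^2+10*r^3))).const_mul (-2)
        |>.const_mul d).add
        ((((hd_pow2 x).mul_const (2+2*r-r^2)).add_const (2*r^3+2*r^4-r^2)).const_mul (-8)
          |>.const_mul (d^3))).add
        (hasDerivAt_const x (d^5*(6*r^2)))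
  rw [Hb.deriv]; ring

theorem hessian_vanishes_in_tangent_direction
    (r : ℝ) (hr : 0 < r) (hr1 : r ≠ 1)
    (γs δs : ℝ)
    (hγ : γs = (2*r + 1) * Real.sqrt ((r + 2)*r*(2*r + 1)) / (r + 2)^2)
    (hδ : δs = 3*(1 + r) * Real.sqrt (3*(r + 2)*r) / (r + 2)^2)
    (vγ vδ : ℝ) (hv : 0 ≤ vδ)
    (hdir : vγ * Real.sqrt (3*(2*r + 1)) = vδ * (r - 1)) :
    deriv (fun γ => deriv (fun γ' => D r γ' δs) γ) γs * vγ^2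
      + 2 * deriv (fun γ => deriv (fun δ => D r γ δ) δs) γs * vγ * vδ
      + deriv (fun δ => deriv (fun δ' => D r γs δ') δ) δs * vδ^2 = 0 := by
  have hr2 : (0:ℝ) < r + 2 := by linarith
  have hc0 : ((r:ℝ) + 2) ≠ 0 := ne_of_gt hr2
  have hs2 : Real.sqrt (3*(2*r+1)) ^ 2 = 3*(2*r+1) :=
    Real.sq_sqrt (by nlinarith)
  have ht2 : Real.sqrt ((r+2)*r*(2*r+1)) ^ 2 = (r+2)*r*(2*r+1) :=
    Real.sq_sqrt (le_of_lt (mul_pos (mul_pos hr2 hr) (by linarith)))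
  have hu2 : Real.sqrt (3*(r+2)*r) ^ 2 = 3*(r+2)*r :=
    Real.sq_sqrt (le_of_lt (mul_pos (mul_pos (by norm_num) hr2) hr))
  have htu : Real.sqrt ((r+2)*r*(2*r+1)) * Real.sqrt (3*(r+2)*r)
      = r*(r+2)*Real.sqrt (3*(2*r+1)) := by
    rw [← Real.sqrt_mul (le_of_lt (mul_pos (mul_pos hr2 hr) (by linarith))),
      show ((r+2)*r*(2*r+1)) * (3*(r+2)*r) = (r*(r+2))^2 * (3*(2*r+1)) by ring,
      Real.sqrt_mul (sq_nonneg _), Real.sqrt_sq (le_of_lt (mul_pos hr (by linarith)))]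
  have hγ' : γs*(r+2)^2 = (2*r+1)*Real.sqrt ((r+2)*r*(2*r+1)) := by
    rw [hγ]
    exact div_mul_cancel₀ _ (pow_ne_zero 2 hc0)
  have hδ' : δs*(r+2)^2 = 3*(1+r)*Real.sqrt (3*(r+2)*r) := by
    rw [hδ]
    exact div_mul_cancel₀ _ (pow_ne_zero 2 hc0)
  have hg2c : γs^2*(r+2)^4 = r*(2*r+1)^3*(r+2) := by
    linear_combination (γs*(r+2)^2 + (2*r+1)*Real.sqrt ((r+2)*r*(2*r+1)))*hγ'
      + (2*r+1)^2*ht2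
  have hd2c : δs^2*(r+2)^4 = 27*r*(1+r)^2*(r+2) := by
    linear_combination (δs*(r+2)^2 + 3*(1+r)*Real.sqrt (3*(r+2)*r))*hδ'
      + 9*(1+r)^2*hu2
  have hwc : γs*δs*Real.sqrt (3*(2*r+1))*(r+2)^4 = 9*r*(2*r+1)^2*(1+r)*(r+2) := by
    linear_combination (δs*(r+2)^2*Real.sqrt (3*(2*r+1)))*hγ'
      + ((2*r+1)*Real.sqrt ((r+2)*r*(2*r+1))*Real.sqrt (3*(2*r+1)))*hδ'
      + (3*(2*r+1)*(1+r)*Real.sqrt (3*(2*r+1)))*htu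
      + (3*(2*r+1)*(1+r)*r*(r+2))*hs2
  have hM : (Real.sqrt (3*(2*r+1))^2*(r+2)^12) ≠ 0 := by
    apply mul_ne_zero
    · rw [hs2]; nlinarith
    · exact pow_ne_zero 12 hc0
  rw [d2Dγ r δs γs, dDmix r δs γs, d2Dδ r γs δs]
  refine (mul_eq_zero.mp ?_).resolve_right hM
  linear_combination
    ((98304*r^2 + 589824*r^3 + 1523712*r^4 + 2113536*r^5 + 1419264*r^6 + (-270336)*r^7 + (-1622016)*r^8 + (-1824768)*r^9 + (-1229184)*r^10 + (-566016)*r^11 + (-183744)*r^12 + (-41664)*r^13 + (-6312)*r^14 + (-576)*r^15 + (-24)*r^16)*(vδ) + ((-98304)*r^2 + (-688128)*r^3 + (-2211840)*r^4 + (-4325376)*r^5 + (-5744640)*r^6 + (-5474304)*r^7 + (-3852288)*r^8 + (-2027520)*r^9 + (-798336)*r^10 + (-232320)*r^11 + (-48576)*r^12 + (-6912)*r^13 + (-600)*r^14 + (-24)*r^15)*(Real.sqrt (3*(2*r+1)))*(vγ) + ((-163840)*r + (-1130496)*r^2 + (-3440640)*r^3 + (-5890048)*r^4 + (-5707776)*r^5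 + (-1858560)*r^6 + 3052544*r^7 + 5575680*r^8 + 4954752*r^9 + 2922304*r^10 + 1224960*r^11 + 369696*r^12 + 79000*r^13 + 11388*r^14 + 996*r^15 + 40*r^16)*(δs)^2*(vδ) + (163840*r + 1294336*r^2 + 4734976*r^3 + 10625024*r^4 + 16332800*r^5 + 18191360*r^6 + 15138816*r^7 + 9563136*r^8 + 4608384*r^9 + 1686080*r^10 + 461120*r^11 + 91424*r^12 + 12424*r^13 + 1036*r^14 + 40*r^15)*(δs)^2*(Real.sqrt (3*(2*r+1)))*(vγ) + (32768 + 196608*r + 491520*r^2 + 622592*r^3 + 301056*r^4 + (-270336)*r^5 + (-596992)*r^6 + (-506880)*r^7 + (-240768)*r^8 + (-53504)*r^9 + 8448*r^10 + 10752*r^11 + 3880*r^12 + 768*r^13 + 84*r^14 + 4*r^15)*(δs)^4*(vδ) + ((-32768) + (-229376)*r + (-720896)*r^2 + (-1343488)*r^3 + (-1644544)*r^4 + (-1374208)*r^5 + (-777216)*r^6 + (-270336)*r^7 + (-29568)*r^8 + 23936*r^9 + 15488*r^10 + 4736*r^11 + 856*r^12 + 88*r^13 + 4*r^14)*(δs)^4*(Real.sqrt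 (3*(2*r+1)))*(vγ) + (655360*r + 5177344*r^2 + 18939904*r^3 + 42500096*r^4 + 65331200*r^5 + 72765440*r^6 + 60555264*r^7 + 38252544*r^8 + 18433536*r^9 + 6744320*r^10 + 1844480*r^11 + 365696*r^12 + 49696*r^13 + 4144*r^14 + 160*r^15)*(γs)*(δs)*(Real.sqrt (3*(2*r+1)))*(vδ) + ((-262144) + (-1835008)*r + (-5767168)*r^2 + (-10747904)*r^3 + (-13156352)*r^4 + (-10993664)*r^5 + (-6217728)*r^6 + (-2162688)*r^7 + (-236544)*r^8 + 191488*r^9 + 123904*r^10 + 37888*r^11 + 6848*r^12 + 704*r^13 + 32*r^14)*(γs)*(δs)^3*(Real.sqrt (3*(2*r+1)))*(vδ) + (589824*r + 3538944*r^2 + 9142272*r^3 + 12681216*r^4 + 8515584*r^5 + (-1622016)*r^6 + (-9732096)*r^7 + (-10948608)*r^8 + (-7375104)*r^9 + (-3396096)*r^10 + (-1102464)*r^11 + (-249984)*r^12 + (-37872)*r^13 + (-3456)*r^14 + (-144)*r^15)*(γs)^2*(vδ) + ((-589824)*r + (-4128768)*r^2 + (-13271040)*r^3 + (-25952256)*r^4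 + (-34467840)*r^5 + (-32845824)*r^6 + (-23113728)*r^7 + (-12165120)*r^8 + (-4790016)*r^9 + (-1393920)*r^10 + (-291456)*r^11 + (-41472)*r^12 + (-3600)*r^13 + (-144)*r^14)*(γs)^2*(Real.sqrt (3*(2*r+1)))*(vγ) + (393216 + 2359296*r + 6045696*r^2 + 8208384*r^3 + 5160960*r^4 + (-1622016)*r^5 + (-6657024)*r^6 + (-6994944)*r^7 + (-4409856)*r^8 + (-1858560)*r^9 + (-525888)*r^10 + (-92736)*r^11 + (-7296)*r^12 + 576*r^13 + 180*r^14 + 12*r^15)*(γs)^2*(δs)^2*(vδ) + ((-393216) + (-2752512)*r + (-8798208)*r^2 + (-17006592)*r^3 + (-22167552)*r^4 + (-20545536)*r^5 + (-13888512)*r^6 + (-6893568)*r^7 + (-2483712)*r^8 + (-625152)*r^9 + (-99264)*r^10 + (-6528)*r^11 + 768*r^12 + 192*r^13 + 12*r^14)*(γs)^2*(δs)^2*(Real.sqrt (3*(2*r+1)))*(vγ) + ((-524288) + (-3670016)*r + (-11730944)*r^2 + (-22675456)*r^3 + (-29556736)*r^4 + (-27394048)*r^5 + (-18518016)*r^6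 + (-9191424)*r^7 + (-3311616)*r^8 + (-833536)*r^9 + (-132352)*r^10 + (-8704)*r^11 + 1024*r^12 + 256*r^13 + 16*r^14)*(γs)^3*(δs)*(Real.sqrt (3*(2*r+1)))*(vδ) + (491520 + 2949120*r + 7618560*r^2 + 10567680*r^3 + 7096320*r^4 + (-1351680)*r^5 + (-8110080)*r^6 + (-9123840)*r^7 + (-6145920)*r^8 + (-2830080)*r^9 + (-918720)*r^10 + (-208320)*r^11 + (-31560)*r^12 + (-2880)*r^13 + (-120)*r^14)*(γs)^4*(vδ) + ((-491520) + (-3440640)*r + (-11059200)*r^2 + (-21626880)*r^3 + (-28723200)*r^4 + (-27371520)*r^5 + (-19261440)*r^6 + (-10137600)*r^7 + (-3991680)*r^8 + (-1161600)*r^9 + (-242880)*r^10 + (-34560)*r^11 + (-3000)*r^12 + (-120)*r^13)*(γs)^4*(Real.sqrt (3*(2*r+1)))*(vγ)) * hdir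
    + ((8192*r^2 + (-16384)*r^3 + (-323584)*r^4 + (-1249280)*r^5 + (-2630144)*r^6 + (-3627008)*r^7 + (-3531264)*r^8 + (-2517504)*r^9 + (-1335840)*r^10 + (-528704)*r^11 + (-154352)*r^12 + (-32336)*r^13 + (-4606)*r^14 + (-400)*r^15 + (-16)*r^16)*(vδ)^2 + (98304*r^2 + 393216*r^3 + 245760*r^4 + (-1720320)*r^5 + (-5609472)*r^6 + (-9056256)*r^7 + (-9529344)*r^8 + (-7096320)*r^9 + (-3864960)*r^10 + (-1554432)*r^11 + (-458304)*r^12 + (-96576)*r^13 + (-13800)*r^14 + (-1200)*r^15 + (-48)*r^16)*(δs)^2*(vδ)^2 + (122880*r^2 + 737280*r^3 + 2027520*r^4 + 3379200*r^5 + 3801600*r^6 + 3041280*r^7 + 1774080*r^8 + 760320*r^9 + 237600*r^10 + 52800*r^11 + 7920*r^12 + 720*r^13 + 30*r^14)*(δs)^4*(vδ)^2 + (163840*r + 1294336*r^2 + 4734976*r^3 + 10625024*r^4 + 16332800*r^5 + 18191360*r^6 + 15138816*r^7 + 9563136*r^8 + 4608384*r^9 + 1686080*r^10 + 461120*r^11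 + 91424*r^12 + 12424*r^13 + 1036*r^14 + 40*r^15)*(γs)^2*(vδ)^2 + ((-196608) + (-1376256)*r + (-4325376)*r^2 + (-8060928)*r^3 + (-9867264)*r^4 + (-8245248)*r^5 + (-4663296)*r^6 + (-1622016)*r^7 + (-177408)*r^8 + 143616*r^9 + 92928*r^10 + 28416*r^11 + 5136*r^12 + 528*r^13 + 24*r^14)*(γs)^2*(δs)^2*(vδ)^2 + ((-65536) + (-458752)*r + (-1466368)*r^2 + (-2834432)*r^3 + (-3694592)*r^4 + (-3424256)*r^5 + (-2314752)*r^6 + (-1148928)*r^7 + (-413952)*r^8 + (-104192)*r^9 + (-16544)*r^10 + (-1088)*r^11 + 128*r^12 + 32*r^13 + 2*r^14)*(γs)^4*(vδ)^2) * hs2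
    + (((-40960)*r + (-200704)*r^2 + (-397312)*r^3 + (-356352)*r^4 + (-15360)*r^5 + 311808*r^6 + 365568*r^7 + 225024*r^8 + 85344*r^9 + 20080*r^10 + 2704*r^11 + 160*r^12)*(vδ)^2 + (16384 + 65536*r + 90112*r^2 + 24576*r^3 + (-67584)*r^4 + (-86016)*r^5 + (-43008)*r^6 + (-6144)*r^7 + 3648*r^8 + 2048*r^9 + 416*r^10 + 32*r^11)*(δs)^2*(vδ)^2 + (32768 + 131072*r + 192512*r^2 + 86016*r^3 + (-98304)*r^4 + (-172032)*r^5 + (-118272)*r^6 + (-44544)*r^7 + (-8832)*r^8 + (-512)*r^9 + 112*r^10 + 16*r^11)*(γs)^2*(vδ)^2) * hwc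
    + ((25344*r + 362112*r^2 + 1410240*r^3 + 2591136*r^4 + 2533392*r^5 + 1180728*r^6 + (-45468)*r^7 + (-364050)*r^8 + (-197712)*r^9 + (-49644)*r^10 + (-5712)*r^11 + (-192)*r^12)*(vδ)^2 + ((-61440) + (-331776)*r + (-801792)*r^2 + (-1136640)*r^3 + (-1036800)*r^4 + (-622080)*r^5 + (-233856)*r^6 + (-41472)*r^7 + 6480*r^8 + 6000*r^9 + 1620*r^10 + 216*r^11 + 12*r^12)*(δs)^2*(vδ)^2 + ((-43008) + (-178176)*r + (-317952)*r^2 + (-340992)*r^3 + (-288000)*r^4 + (-241920)*r^5 + (-189504)*r^6 + (-112896)*r^7 + (-45576)*r^8 + (-11640)*r^9 + (-1698)*r^10 + (-108)*r^11)*(γs)^2*(vδ)^2) * hg2c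
    + ((14080*r + 96384*r^2 + 258240*r^3 + 279968*r^4 + (-73584)*r^5 + (-555912)*r^6 + (-695964)*r^7 + (-470034)*r^8 + (-199116)*r^9 + (-57202)*r^10 + (-12036)*r^11 + (-1848)*r^12 + (-152)*r^13)*(vδ)^2 + ((-2048) + (-6144)*r + 19968*r^2 + 146432*r^3 + 357120*r^4 + 486144*r^5 + 417984*r^6 + 237312*r^7 + 89496*r^8 + 21800*r^9 + 3174*r^10 + 228*r^11 + 4*r^12)*(δs)^2*(vδ)^2) * hd2c
end
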